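/- Let f(x₁,…,xₙ) be a polynomial over ℂ and define p = f - v. If v is a critical value of f (i.e. there exists a point where all partial derivatives of f vanish and f takes value v), then setting p̃(x₁,…,x_{n-1}) = Disc_{xₙ}(p), the point (x₁⁰,…,x_{n-1}⁰) obtained by forgetting the last coordinate of the critical point satisfies p̃ = 0 and ∂p̃/∂xᵢ = 0 for all i = 1,…,n-1, provided the leading coefficient of p in xₙ does not vanish at that point. -/

import Mathlib

/-!
Let `q` be `p` as a polynomial in the last variable, with coefficients evaluated at a point.
At the critical point, `aₙ` is a root of `q` with `q'(aₙ) = 0`, so `q = (X - aₙ) g` with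
`g(aₙ) = q'(aₙ)`. Splitting `g` in a ring extension and applying the product formula for the
discriminant, `Disc(q)` is a multiple of `g(aₙ)²`. The product formula is only assumed for split
complex polynomials, but it transfers to any commutative ring through the universal split
polynomial, since `ℂ` is infinite. Over `ℂ` this gives `p̃(b) = 0`. Over the dual numbers, at the
point `b + ε eᵢ`, the root `aₙ` persists because `p(a + ε eᵢ) = 0`, and `q'(aₙ)` is a multiple of
`ε`, so its square vanishes; hence `p̃(b) + ε ∂ᵢp̃(b) = 0`.
-/

open Polynomial Finset

universe u

theorem Polynomial.Monic.exists_injective_map_eq_prod_X_sub_C {R : Type u} [CommRing R]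
    [Nontrivial R] {m : R[X]} (hm : m.Monic) :
    ∃ (S : Type u) (_ : CommRing S) (ι : R →+* S), Function.Injective ι ∧
      ∃ r : Fin m.natDegree → S, m.map ι = ∏ i, (X - C (r i)) := by
  generalize hk : m.natDegree = k
  induction k generalizing R with
  | zero => exact ⟨R, _, RingHom.id R, Function.injective_id, Fin.elim0, by
      simp [hm.natDegree_eq_zero.mp hk]⟩
  | succ k ih =>
    have hof : Function.Injective (AdjoinRoot.of m) := by
      refine (injective_iff_map_eq_zero _).2 fun x hx => by_contra fun hx0 => ?_
      exact hm.not_dvd_of_natDegree_lt (q := C x) (by simpa using hx0) (by simp [hk])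
        (AdjoinRoot.mk_eq_zero.mp hx)
    have : Nontrivial (AdjoinRoot m) := hof.nontrivial
    set α := AdjoinRoot.root m
    have hroot : (m.map (AdjoinRoot.of m)).IsRoot α := AdjoinRoot.isRoot_root m
    set g := m.map (AdjoinRoot.of m) /ₘ (X - C α)
    have hfac : (X - C α) * g = m.map (AdjoinRoot.of m) := mul_divByMonic_eq_iff_isRoot.2 hroot
    have hg : g.Monic := (monic_X_sub_C α).of_mul_monic_left (hfac ▸ hm.map _)
    have hgdeg : g.natDegree = k := by
      rw [natDegree_divByMonic _ (monic_X_sub_C α), natDegree_X_sub_C, hm.natDegree_map, hk]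
      rfl
    obtain ⟨S, _, ι, hι, r, hr⟩ := ih hg hgdeg
    refine ⟨S, _, ι.comp (AdjoinRoot.of m), hι.comp hof, Fin.cons (ι α) r, ?_⟩
    rw [← map_map, ← hfac, Polynomial.map_mul, hr, Fin.prod_univ_succ]
    simp

theorem Polynomial.exists_injective_map_eq_C_mul_prod_X_sub_C {R : Type u} [CommRing R]
    [Nontrivial R] {g : R[X]} (hg : IsUnit g.leadingCoeff) :
    ∃ (S : Type u) (_ : CommRing S) (ι : R →+* S), Function.Injective ι ∧
      ∃ r : Fin g.natDegree → S, g.map ι = C (ι g.leadingCoeff) * ∏ i, (X - C (r i)) := by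
  set m := C (↑hg.unit⁻¹ : R) * g
  have hm : m.Monic := monic_C_mul_of_mul_leadingCoeff_eq_one hg.val_inv_mul
  have hgm : g = C g.leadingCoeff * m := by
    rw [← mul_assoc, ← C_mul, hg.mul_val_inv, C_1, one_mul]
  have hdeg : m.natDegree = g.natDegree := natDegree_C_mul_of_isUnit hg.unit⁻¹.isUnit g
  obtain ⟨S, _, ι, hι, r, hr⟩ := hm.exists_injective_map_eq_prod_X_sub_C
  refine ⟨S, _, ι, hι, r ∘ finCongr hdeg.symm, ?_⟩
  conv_lhs => rw [hgm, Polynomial.map_mul, map_C, hr]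
  exact congrArg _ ((finCongr hdeg.symm).prod_comp fun i => X - C (r i)).symm

theorem Polynomial.sum_fin_C_coeff_mul_X_pow {R : Type*} [CommRing R] {d : ℕ} {P : R[X]}
    (hP : P.natDegree ≤ d) :
    ∑ i : Fin (d + 1), C (P.coeff i) * X ^ (i : ℕ) = P := by
  rw [Fin.sum_univ_eq_sum_range (fun i => C (P.coeff i) * X ^ i)]
  exact (P.as_sum_range_C_mul_X_pow' (Nat.lt_succ_of_le hP)).symm

namespace MvPolynomial

variable {R : Type*} [CommRing R] {n : ℕ}

theorem eval_comp_C {σ : Type*} (c : σ → R) : (eval c).comp C = RingHom.id R :=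
  RingHom.ext fun _ => eval_C _

theorem map_eval₂_coeff {A B : Type*} [CommRing A] [CommRing B] {d : ℕ}
    (D : MvPolynomial (Fin (d + 1)) R) (φ : A →+* B) (ψ : R →+* A) (P : A[X]) :
    φ (D.eval₂ ψ fun i : Fin (d + 1) => P.coeff i) =
      D.eval₂ (φ.comp ψ) fun i : Fin (d + 1) => (P.map φ).coeff i := by
  rw [eval₂_comp_left]
  simp only [Function.comp_def, Polynomial.coeff_map]

noncomputable def finSuccEquivLast (R : Type*) [CommRing R] (n : ℕ) :
    MvPolynomial (Fin (n + 1)) R ≃ₐ[R] (MvPolynomial (Fin n) R)[X] :=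
  (renameEquiv R (finRotate (n + 1))).trans (finSuccEquiv R n)

theorem eval_map_finSuccEquivLast {T : Type*} [CommRing T] [Algebra R T] (c : Fin n → T) (β : T)
    (p : MvPolynomial (Fin (n + 1)) R) :
    ((finSuccEquivLast R n p).map (aeval c).toRingHom).eval β = aeval (Fin.snoc c β) p := by
  let L : MvPolynomial (Fin (n + 1)) R →ₐ[R] T :=
    (Polynomial.eval₂AlgHom (aeval c) β fun _ => Commute.all _ _).comp
      (finSuccEquivLast R n).toAlgHom
  have hL : L = aeval (Fin.snoc c β) := by
    refine algHom_ext fun k => ?_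
    induction k using Fin.lastCases with
    | last => simp [L, finSuccEquivLast, finSuccEquiv_X_zero]
    | cast j =>
      simp [L, finSuccEquivLast, finRotate_apply, Fin.coeSucc_eq_succ, finSuccEquiv_X_succ]
  rw [Polynomial.eval_map, ← hL]
  rfl

theorem derivative_finSuccEquiv (p : MvPolynomial (Fin (n + 1)) R) :
    derivative (finSuccEquiv R n p) = finSuccEquiv R n (pderiv 0 p) := by
  induction p using MvPolynomial.induction_on with
  | C r => simp [finSuccEquiv_apply]
  | add p q hp hq => simp only [map_add, hp, hq]
  | mul_X p j hp =>
    rw [map_mul, derivative_mul, hp, pderiv_mul, map_add, map_mul, map_mul]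
    cases j using Fin.cases with
    | zero => simp [finSuccEquiv_X_zero]
    | succ k => simp [finSuccEquiv_X_succ, pderiv_X_of_ne (Fin.succ_ne_zero k)]

theorem derivative_finSuccEquivLast (p : MvPolynomial (Fin (n + 1)) R) :
    derivative (finSuccEquivLast R n p) = finSuccEquivLast R n (pderiv (Fin.last n) p) := by
  have := pderiv_rename (finRotate (n + 1)).injective (Fin.last n) p
  rw [finRotate_last] at this
  simp only [finSuccEquivLast, AlgEquiv.trans_apply, renameEquiv_apply, derivative_finSuccEquiv,
    this]

open TrivSqZeroExt in
theorem aeval_inl_add_inr_single {σ : Type*} [DecidableEq σ] (a : σ → R) (i : σ)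
    (u : MvPolynomial σ R) :
    aeval (fun j => (inl (a j) + inr (Pi.single i 1 j) : DualNumber R)) u =
      inl (eval a u) + inr (eval a (pderiv i u)) := by
  induction u using MvPolynomial.induction_on with
  | C r => simp [algebraMap_eq_inl]
  | add p q hp hq =>
    simp only [map_add, hp, hq, inl_add, inr_add]
    abel
  | mul_X p j hp =>
    rw [map_mul, hp, aeval_X]
    ext
    · simp
    · rcases eq_or_ne j i with rfl | hji
      · simp
        ring
      · simp [pderiv_X_of_ne hji, Pi.single_eq_of_ne hji, mul_comm]

end MvPolynomial

section Discriminant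

variable {K : Type*} [CommRing K]

def IsDiscriminant (d : ℕ) (D : MvPolynomial (Fin (d + 1)) K) : Prop :=
  ∀ (c : Fin (d + 1) → K) (x : Fin d → K),
    (∑ i : Fin (d + 1), C (c i) * X ^ (i : ℕ) : K[X]) =
        C (c (Fin.last d)) * ∏ i, (X - C (x i)) →
      MvPolynomial.eval c D =
        c (Fin.last d) ^ (2 * d - 2) *
          ∏ i : Fin d, ∏ j ∈ univ.filter (fun j => i < j), (x i - x j) ^ 2

theorem IsDiscriminant.eval_coeff_C_mul_prod [Nontrivial K] {d : ℕ}
    {D : MvPolynomial (Fin (d + 1)) K} (hD : IsDiscriminant d D) (y : K) (x : Fin d → K) :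
    D.eval (fun i : Fin (d + 1) => (C y * ∏ j, (X - C (x j))).coeff i) =
      y ^ (2 * d - 2) * ∏ i : Fin d, ∏ j ∈ univ.filter (fun j => i < j), (x i - x j) ^ 2 := by
  have hmonic : (∏ j, (X - C (x j))).Monic := monic_prod_of_monic _ _ fun j _ => monic_X_sub_C _
  have hdeg : (∏ j, (X - C (x j))).natDegree = d := by
    simp [natDegree_prod_of_monic _ _ fun j _ => monic_X_sub_C (x j), natDegree_X]
  have htop : (C y * ∏ j, (X - C (x j))).coeff d = y := by
    have := hmonic.coeff_natDegree
    rw [hdeg] at this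
    rw [coeff_C_mul, this, mul_one]
  have := hD _ x (by
    rw [sum_fin_C_coeff_mul_X_pow ((natDegree_C_mul_le _ _).trans hdeg.le), Fin.val_last, htop])
  rwa [Fin.val_last, htop] at this

theorem IsDiscriminant.eval₂_coeff_C_mul_prod [IsDomain K] [Infinite K] {d : ℕ}
    {D : MvPolynomial (Fin (d + 1)) K} (hD : IsDiscriminant d D) {S : Type*} [CommRing S]
    (f : K →+* S) (y : S) (x : Fin d → S) :
    D.eval₂ f (fun i : Fin (d + 1) => (C y * ∏ j, (X - C (x j))).coeff i) =
      y ^ (2 * d - 2) * ∏ i : Fin d, ∏ j ∈ univ.filter (fun j => i < j), (x i - x j) ^ 2 := by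
  -- the identity for the universal split polynomial `X₀ ∏ⱼ (X - Xⱼ)` holds at every point of `K`
  set P : (MvPolynomial (Option (Fin d)) K)[X] :=
    C (MvPolynomial.X none) * ∏ j, (X - C (MvPolynomial.X (some j)))
  have key : D.eval₂ MvPolynomial.C (fun i : Fin (d + 1) => P.coeff i) =
      MvPolynomial.X none ^ (2 * d - 2) * ∏ i : Fin d, ∏ j ∈ univ.filter (fun j => i < j),
        (MvPolynomial.X (some i) - MvPolynomial.X (some j)) ^ 2 := by
    refine MvPolynomial.funext fun c => ?_
    rw [MvPolynomial.map_eval₂_coeff, MvPolynomial.eval_comp_C, MvPolynomial.eval₂_id]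
    simpa [P, Polynomial.map_prod] using hD.eval_coeff_C_mul_prod (c none) (c ∘ some)
  have := congrArg (MvPolynomial.eval₂Hom f (fun o => o.elim y x)) key
  rw [MvPolynomial.map_eval₂_coeff, MvPolynomial.eval₂Hom_comp_C] at this
  simpa [P, Polynomial.map_prod] using this

theorem IsDiscriminant.aeval_coeff_eq_zero_of_isRoot {R : Type u} [CommRing R] [Nontrivial R]
    [IsDomain K] [Infinite K] [Algebra K R] {d : ℕ} {D : MvPolynomial (Fin (d + 1)) K}
    (hD : IsDiscriminant d D) {q : R[X]} (hdeg : q.natDegree ≤ d) (hu : IsUnit (q.coeff d))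
    {α : R} (h0 : q.IsRoot α) (h1 : q.derivative.eval α ^ 2 = 0) :
    MvPolynomial.aeval (fun i : Fin (d + 1) => q.coeff i) D = 0 := by
  set g := q /ₘ (X - C α)
  have hfac : (X - C α) * g = q := mul_divByMonic_eq_iff_isRoot.2 h0
  have hqdeg : q.natDegree = d := le_antisymm hdeg (le_natDegree_of_ne_zero hu.ne_zero)
  have hlc : g.leadingCoeff = q.coeff d := by
    rw [← hqdeg, ← leadingCoeff, ← hfac, leadingCoeff_monic_mul (monic_X_sub_C α)]
  have hg0 : g ≠ 0 := fun h => hu.ne_zero (by rw [← hlc, h, leadingCoeff_zero])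
  have hgdeg : d = g.natDegree + 1 := by
    rw [← hqdeg, ← hfac, (monic_X_sub_C α).natDegree_mul' hg0, natDegree_X_sub_C, add_comm]
  have hgα : g.eval α ^ 2 = 0 := by
    have : q.derivative.eval α = g.eval α := by
      rw [← hfac]
      simp [derivative_mul]
    rwa [this] at h1
  obtain ⟨S, _, ι, hι, r, hr⟩ := exists_injective_map_eq_C_mul_prod_X_sub_C (hlc ▸ hu)
  subst hgdeg
  set x : Fin (g.natDegree + 1) → S := Fin.cons (ι α) r
  have hq : q.map ι = C (ι g.leadingCoeff) * ∏ i, (X - C (x i)) := by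
    rw [← hfac, Polynomial.map_mul, hr, Fin.prod_univ_succ]
    simp only [x, Fin.cons_zero, Fin.cons_succ, Polynomial.map_sub, map_X, map_C]
    ring
  have hroots : ∏ i, ∏ j ∈ univ.filter (fun j => i < j), (x i - x j) ^ 2 = 0 := by
    have hgι : ι (g.eval α) = ι g.leadingCoeff * ∏ k, (ι α - r k) := by
      rw [← eval₂_at_apply, ← eval_map, hr]
      simp [eval_prod]
    have hprod : (∏ k, (ι α - r k)) ^ 2 = 0 := by
      refine (((hlc ▸ hu).map ι).pow 2).mul_right_eq_zero.mp ?_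
      rw [← mul_pow, ← hgι, ← map_pow, hgα, map_zero]
    rw [Fin.prod_univ_succ, filter_lt_eq_Ioi, Fin.prod_Ioi_zero]
    simp [x, prod_pow, hprod]
  apply hι
  rw [MvPolynomial.aeval_def, MvPolynomial.map_eval₂_coeff, hq, hD.eval₂_coeff_C_mul_prod,
    hroots, mul_zero, map_zero]

/-- The paper's `p̃ = Disc_{xₙ}(p)`. -/
noncomputable def discrLast {n d : ℕ} (D : MvPolynomial (Fin (d + 1)) K)
    (p : MvPolynomial (Fin (n + 1)) K) : MvPolynomial (Fin n) K :=
  MvPolynomial.aeval (fun i : Fin (d + 1) => (MvPolynomial.finSuccEquivLast K n p).coeff i) D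

theorem IsDiscriminant.aeval_discrLast_eq_zero [IsDomain K] [Infinite K] {n d : ℕ}
    {D : MvPolynomial (Fin (d + 1)) K} (hD : IsDiscriminant d D) {p : MvPolynomial (Fin (n + 1)) K}
    (hdeg : (MvPolynomial.finSuccEquivLast K n p).natDegree ≤ d) {T : Type u} [CommRing T]
    [Nontrivial T] [Algebra K T] {c : Fin n → T} {β : T}
    (hu : IsUnit (MvPolynomial.aeval c ((MvPolynomial.finSuccEquivLast K n p).coeff d)))
    (h0 : MvPolynomial.aeval (Fin.snoc c β) p = 0)
    (h1 : MvPolynomial.aeval (Fin.snoc c β) (MvPolynomial.pderiv (Fin.last n) p) ^ 2 = 0) :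
    MvPolynomial.aeval c (discrLast D p) = 0 := by
  set q := (MvPolynomial.finSuccEquivLast K n p).map (MvPolynomial.aeval c).toRingHom
  have hcoeff : (fun i : Fin (d + 1) =>
      MvPolynomial.aeval c ((MvPolynomial.finSuccEquivLast K n p).coeff i)) =
      fun i : Fin (d + 1) => q.coeff i := funext fun i => (coeff_map _ _).symm
  rw [discrLast, MvPolynomial.comp_aeval_apply, hcoeff]
  refine hD.aeval_coeff_eq_zero_of_isRoot (α := β) (natDegree_map_le.trans hdeg) ?_ ?_ ?_
  · rwa [coeff_map]
  · rwa [IsRoot, MvPolynomial.eval_map_finSuccEquivLast]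
  · rwa [derivative_map, MvPolynomial.derivative_finSuccEquivLast,
      MvPolynomial.eval_map_finSuccEquivLast]

theorem IsDiscriminant.eval_discrLast_eq_zero [IsDomain K] [Infinite K] {n d : ℕ}
    {D : MvPolynomial (Fin (d + 1)) K} (hD : IsDiscriminant d D) {p : MvPolynomial (Fin (n + 1)) K}
    (hdeg : (MvPolynomial.finSuccEquivLast K n p).natDegree ≤ d) {a : Fin (n + 1) → K}
    (hu : IsUnit (MvPolynomial.eval (Fin.init a) ((MvPolynomial.finSuccEquivLast K n p).coeff d)))
    (h0 : MvPolynomial.eval a p = 0)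
    (h1 : MvPolynomial.eval a (MvPolynomial.pderiv (Fin.last n) p) = 0) :
    MvPolynomial.eval (Fin.init a) (discrLast D p) = 0 := by
  refine hD.aeval_discrLast_eq_zero (β := a (Fin.last n)) hdeg hu ?_ ?_
  · rw [Fin.snoc_init_self]
    exact h0
  · rw [Fin.snoc_init_self]
    exact (congrArg (· ^ 2) h1).trans (zero_pow two_ne_zero)

open TrivSqZeroExt in
theorem IsDiscriminant.eval_pderiv_discrLast_eq_zero [IsDomain K] [Infinite K] {n d : ℕ}
    {D : MvPolynomial (Fin (d + 1)) K} (hD : IsDiscriminant d D) {p : MvPolynomial (Fin (n + 1)) K}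
    (hdeg : (MvPolynomial.finSuccEquivLast K n p).natDegree ≤ d) {a : Fin (n + 1) → K}
    (hu : IsUnit (MvPolynomial.eval (Fin.init a) ((MvPolynomial.finSuccEquivLast K n p).coeff d)))
    (h0 : MvPolynomial.eval a p = 0) (h1 : ∀ k, MvPolynomial.eval a (MvPolynomial.pderiv k p) = 0)
    (i : Fin n) : MvPolynomial.eval (Fin.init a) (MvPolynomial.pderiv i (discrLast D p)) = 0 := by
  set c : Fin n → DualNumber K := fun j => inl (Fin.init a j) + inr (Pi.single i 1 j)
  have hc (u : MvPolynomial (Fin n) K) : MvPolynomial.aeval c u =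
      inl (MvPolynomial.eval (Fin.init a) u) +
        inr (MvPolynomial.eval (Fin.init a) (MvPolynomial.pderiv i u)) :=
    MvPolynomial.aeval_inl_add_inr_single _ i u
  have hsnoc : Fin.snoc c (inl (a (Fin.last n))) =
      fun k => (inl (a k) + inr (Pi.single i.castSucc 1 k) : DualNumber K) := by
    funext k
    induction k using Fin.lastCases with
    | last => simp [(Fin.castSucc_lt_last i).ne']
    | cast j => simp [c, Fin.init, Pi.single_apply]
  have := hD.aeval_discrLast_eq_zero (c := c) (β := inl (a (Fin.last n))) hdeg ?_ ?_ ?_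
  · rw [hc] at this
    simpa using congrArg snd this
  · rw [hc, isUnit_iff_isUnit_fst]
    simpa using hu
  · rw [hsnoc, MvPolynomial.aeval_inl_add_inr_single, h0, h1]
    simp
  · rw [hsnoc, MvPolynomial.aeval_inl_add_inr_single, h1]
    simp [sq]

end Discriminant

/-- Let `f` be a polynomial in `n+1` variables over ℂ, `v` a critical value of `f`
attained at the critical point `a`, and `p = f - v`.  Separate the last variable:
`Q` is `p` viewed as a univariate polynomial (of degree `d`) in the last variable
with coefficients polynomials in the remaining variables, and let
`p̃ = Disc_{xₙ}(p)` be obtained by substituting the coefficients of `Q` into the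
universal degree-`d` discriminant `D`.  If the leading coefficient of `p` in the
last variable does not vanish at `b` (the critical point with its last coordinate
forgotten), then `p̃(b) = 0` and `∂p̃/∂xᵢ (b) = 0` for all `i`. -/
theorem stmt_14 (n d : ℕ) (f : MvPolynomial (Fin (n + 1)) ℂ) (v : ℂ)
    (a : Fin (n + 1) → ℂ)
    (hcrit : ∀ i : Fin (n + 1), MvPolynomial.eval a (MvPolynomial.pderiv i f) = 0)
    (hv : MvPolynomial.eval a f = v)
    (p : MvPolynomial (Fin (n + 1)) ℂ) (hpdef : p = f - MvPolynomial.C v)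
    (Q : Polynomial (MvPolynomial (Fin n) ℂ))
    (hQ : Q = MvPolynomial.finSuccEquiv ℂ n (MvPolynomial.rename (⇑(finRotate (n + 1))) p))
    (hQd : Q.natDegree = d)
    (D : MvPolynomial (Fin (d + 1)) ℂ)
    (hD : ∀ (c : Fin (d + 1) → ℂ) (x : Fin d → ℂ),
      (∑ i : Fin (d + 1), C (c i) * X ^ (i : ℕ) : Polynomial ℂ) =
          C (c (Fin.last d)) * ∏ i, (X - C (x i)) →
        MvPolynomial.eval c D =
          c (Fin.last d) ^ (2 * d - 2) *
            ∏ i : Fin d, ∏ j ∈ Finset.univ.filter (fun j => i < j), (x i - x j) ^ 2)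
    (ptilde : MvPolynomial (Fin n) ℂ)
    (hptilde : ptilde = MvPolynomial.aeval (fun i : Fin (d + 1) => Q.coeff (i : ℕ)) D)
    (b : Fin n → ℂ) (hb : b = fun i : Fin n => a i.castSucc)
    (hlc : MvPolynomial.eval b (Q.coeff d) ≠ 0) :
    MvPolynomial.eval b ptilde = 0 ∧
      ∀ i : Fin n, MvPolynomial.eval b (MvPolynomial.pderiv i ptilde) = 0 := by
  replace hQ : Q = MvPolynomial.finSuccEquivLast ℂ n p := hQ
  replace hptilde : ptilde = discrLast D p := by rw [hptilde, hQ]; rfl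
  replace hD : IsDiscriminant d D := hD
  replace hb : b = Fin.init a := hb
  subst hQ hptilde hb
  have hp : MvPolynomial.eval a p = 0 := by simp [hpdef, hv]
  have hpd (k : Fin (n + 1)) : MvPolynomial.eval a (MvPolynomial.pderiv k p) = 0 := by
    simp [hpdef, hcrit]
  have hu := isUnit_iff_ne_zero.2 hlc
  exact ⟨hD.eval_discrLast_eq_zero hQd.le hu hp (hpd _),
    hD.eval_pderiv_discrLast_eq_zero hQd.le hu hp hpd⟩
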